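/- For every set P of n ≥ 3 points in general position in the plane, the independence number α(D(P)) of the disjointness graph D(P) equals n−1 or n. -/

import Mathlib

noncomputable section

/-- Points of the plane. -/
abbrev Pl := ℝ × ℝ

/-- `P` is in general position: no three (distinct) points of `P` are collinear. -/
def GenPos (P : Set Pl) : Prop :=
  ∀ a ∈ P, ∀ b ∈ P, ∀ c ∈ P, a ≠ b → a ≠ c → b ≠ c →
    ¬ Collinear ℝ ({a, b, c} : Set Pl)

/-- The set of all closed straight-line segments with (distinct) endpoints in `P`. -/
def Segs (P : Set Pl) : Set (Set Pl) :=
  {s | ∃ a ∈ P, ∃ b ∈ P, a ≠ b ∧ s = segment ℝ a b}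

/-- The edge disjointness graph of `P`: vertices are the segments of `P`,
two of them adjacent iff they are disjoint. -/
def DisjGraph (P : Set Pl) : SimpleGraph ↥(Segs P) where
  Adj s t := Disjoint (s : Set Pl) (t : Set Pl)
  symm := ⟨fun _ _ h => h.symm⟩
  loopless := by
    constructor
    rintro ⟨s, a, ha, b, hb, hab, rfl⟩ h
    exact (Set.not_disjoint_iff.2
      ⟨a, left_mem_segment ℝ a b, left_mem_segment ℝ a b⟩) h

/-- An independent set of vertices: pairwise non-adjacent. -/
def IsIndepSet {V : Type*} (G : SimpleGraph V) (s : Set V) : Prop :=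
  s.Pairwise fun a b => ¬ G.Adj a b

/-- Twice the signed area of the triangle `a b c`; its sign is the orientation. -/
def det3 (a b c : Pl) : ℝ :=
  (b.1 - a.1) * (c.2 - a.2) - (b.2 - a.2) * (c.1 - a.1)

/-- `p 0, …, p (n-1)` are in convex position, appearing in this
(counterclockwise) cyclic order on their convex hull. -/
def ConvexCyclic {n : ℕ} (p : Fin n → Pl) : Prop :=
  ∀ i j k : Fin n, i < j → j < k → 0 < det3 (p i) (p j) (p k)

/-- `P` is in convex position: every point of `P` is a vertex of the convex hull. -/
def ConvexPos (P : Set Pl) : Prop :=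
  ∀ x ∈ P, x ∉ convexHull ℝ (P \ {x})

/-- `P` and `Q` have the same order type. -/
def SameOrderType (P Q : Set Pl) : Prop :=
  ∃ γ : Pl → Pl, Set.BijOn γ P Q ∧
    ∀ a ∈ P, ∀ b ∈ P, ∀ c ∈ P,
      Real.sign (det3 a b c) = Real.sign (det3 (γ a) (γ b) (γ c))

/-- A thrackle of `P`: a set of segments of `P`, any two of which intersect. -/
def IsThrackle (P : Set Pl) (T : Set (Set Pl)) : Prop :=
  T ⊆ Segs P ∧ ∀ s ∈ T, ∀ t ∈ T, s ≠ t → ¬ Disjoint s t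

end

/-!
A star of segments from one point of `P` is independent in `D(P)`, giving `α(D(P)) ≥ n - 1`.
Conversely an independent set is a thrackle `T` (pairwise intersecting segments); view it as a
geometric graph on `P`. If `vw` is an edge and `w` has a further neighbour `x`, every other
neighbour `u` of `v` lies on the same side of the line `vw` as `x`, since otherwise `vu` and
`wx` would be disjoint. Two neighbours `w` of `v` cannot both see the rest of the neighbourhood
of `v` on the same side, so every vertex has at most two neighbours of degree `≥ 2`. Counting the
degree sum by splitting off the vertices of degree `≤ 1` then gives `|T| ≤ n`.
-/

open Finset

namespace SimpleGraph

variable {V : Type*} [Fintype V] (G : SimpleGraph V) [DecidableRel G.Adj]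

theorem sum_card_neighborFinset_filter_two_le_degree :
    ∑ v, #{w ∈ G.neighborFinset v | 2 ≤ G.degree w} =
      ∑ v, if 2 ≤ G.degree v then G.degree v else 0 := by
  calc ∑ v, #{w ∈ G.neighborFinset v | 2 ≤ G.degree w}
      = ∑ v, ∑ w, if G.Adj v w ∧ 2 ≤ G.degree w then 1 else 0 := by
        simp only [neighborFinset_eq_filter, filter_filter, card_filter]
    _ = ∑ w, ∑ v, if G.Adj w v ∧ 2 ≤ G.degree w then 1 else 0 := by
        rw [sum_comm]; simp only [G.adj_comm]
    _ = ∑ w, if 2 ≤ G.degree w then G.degree w else 0 := by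
        refine sum_congr rfl fun w _ => ?_
        rw [← card_filter, ← filter_filter, ← neighborFinset_eq_filter]
        split_ifs with hw <;> simp [hw]

theorem card_edgeFinset_le_card_of_card_neighborFinset_filter_le_two
    (h : ∀ v, #{w ∈ G.neighborFinset v | 2 ≤ G.degree w} ≤ 2) :
    #G.edgeFinset ≤ Fintype.card V := by
  have hv : ∀ v, (if G.degree v ≤ 1 then G.degree v else 0) +
      #{w ∈ G.neighborFinset v | 2 ≤ G.degree w} ≤ 2 := by
    intro v
    split_ifs with hv
    · have := (card_le_card (filter_subset (2 ≤ G.degree ·) _)).trans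
        (G.card_neighborFinset_eq_degree v).le
      omega
    · simpa using h v
  have := calc 2 * #G.edgeFinset
      = ∑ v, G.degree v := G.sum_degrees_eq_twice_card_edges.symm
    _ = ∑ v, ((if G.degree v ≤ 1 then G.degree v else 0) +
          if 2 ≤ G.degree v then G.degree v else 0) := by
        refine sum_congr rfl fun v _ => ?_
        split_ifs <;> omega
    _ = ∑ v, ((if G.degree v ≤ 1 then G.degree v else 0) +
          #{w ∈ G.neighborFinset v | 2 ≤ G.degree w}) := by
        rw [sum_add_distrib, sum_add_distrib, sum_card_neighborFinset_filter_two_le_degree]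
    _ ≤ ∑ _v : V, 2 := sum_le_sum fun v _ => hv v
    _ = 2 * Fintype.card V := by rw [sum_const, card_univ, smul_eq_mul, mul_comm]
  omega

end SimpleGraph

theorem det3_swap (a b c : Pl) : det3 a c b = -det3 a b c := by
  simp only [det3]; ring

theorem det3_add_smul_sub_left (u v a : Pl) (t : ℝ) :
    det3 u v (u + t • (a - u)) = t * det3 u v a := by
  simp only [det3, Prod.fst_add, Prod.snd_add, Prod.smul_fst, Prod.smul_snd, Prod.fst_sub,
    Prod.snd_sub, smul_eq_mul]
  ring

theorem det3_add_smul_sub_right (u v a : Pl) (t : ℝ) :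
    det3 u v (v + t • (a - v)) = t * det3 u v a := by
  simp only [det3, Prod.fst_add, Prod.snd_add, Prod.smul_fst, Prod.smul_snd, Prod.fst_sub,
    Prod.snd_sub, smul_eq_mul]
  ring

/-- `det3 u v` vanishes at `u` and `v` and has a constant strict sign on each open half-plane
of the line `uv`, so the two segments can only meet on that line, i.e. at `u = v`. -/
theorem disjoint_segment_of_det3_mul_neg {u v a x : Pl} (huv : u ≠ v)
    (h : det3 u v a * det3 u v x < 0) : Disjoint (segment ℝ u a) (segment ℝ v x) := by
  rw [Set.disjoint_left]
  rintro _ hp hp'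
  rw [segment_eq_image'] at hp hp'
  obtain ⟨t, ⟨ht, -⟩, rfl⟩ := hp
  obtain ⟨s, ⟨hs, -⟩, hst : v + s • (x - v) = u + t • (a - u)⟩ := hp'
  have heq : t * det3 u v a = s * det3 u v x := by
    rw [← det3_add_smul_sub_left, ← det3_add_smul_sub_right, hst]
  have ht0 : t * det3 u v a = 0 := by nlinarith [mul_nonneg ht hs]
  have hs0 : s * det3 u v x = 0 := heq ▸ ht0
  have ha : det3 u v a ≠ 0 := by rintro h0; simp [h0] at h
  have hx : det3 u v x ≠ 0 := by rintro h0; simp [h0] at h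
  rw [(mul_eq_zero.1 ht0).resolve_right ha, (mul_eq_zero.1 hs0).resolve_right hx] at hst
  simp only [zero_smul, add_zero] at hst
  exact huv hst.symm

theorem mem_affineSpan_pair_of_det3_eq_zero {a b c : Pl} (hab : a ≠ b) (h : det3 a b c = 0) :
    c ∈ line[ℝ, a, b] := by
  have hn : (b.1 - a.1) ^ 2 + (b.2 - a.2) ^ 2 ≠ 0 := by
    intro h0
    exact hab (Prod.ext (by nlinarith [sq_nonneg (b.1 - a.1), sq_nonneg (b.2 - a.2)])
      (by nlinarith [sq_nonneg (b.1 - a.1), sq_nonneg (b.2 - a.2)]))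
  -- `c - a` is its own orthogonal projection onto `b - a`
  have hc : AffineMap.lineMap a b
      (((c.1 - a.1) * (b.1 - a.1) + (c.2 - a.2) * (b.2 - a.2)) /
        ((b.1 - a.1) ^ 2 + (b.2 - a.2) ^ 2)) = c := by
    rw [AffineMap.lineMap_apply_module']
    unfold det3 at h
    ext <;> simp only [Prod.fst_add, Prod.snd_add, Prod.smul_fst, Prod.smul_snd, Prod.fst_sub,
      Prod.snd_sub, smul_eq_mul] <;> field_simp
    · linear_combination (b.2 - a.2) * h
    · linear_combination -(b.1 - a.1) * h
  exact hc ▸ AffineMap.lineMap_mem_affineSpan_pair _ _ _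

theorem GenPos.det3_ne_zero {P : Set Pl} (hP : GenPos P) {a b c : Pl} (ha : a ∈ P) (hb : b ∈ P)
    (hc : c ∈ P) (hab : a ≠ b) (hac : a ≠ c) (hbc : b ≠ c) : det3 a b c ≠ 0 := fun h =>
  hP c hc a ha b hb hac.symm hbc.symm hab
    (collinear_insert_of_mem_affineSpan_pair (mem_affineSpan_pair_of_det3_eq_zero hab h))

theorem segment_right_injective {E : Type*} [AddCommGroup E] [Module ℝ E] (p : E) :
    Function.Injective (segment ℝ p) := fun q q' h =>
  (wbtw_swap_right_iff ℝ p).1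
    ⟨mem_segment_iff_wbtw.1 (h ▸ right_mem_segment ℝ p q),
      mem_segment_iff_wbtw.1 (h.symm ▸ right_mem_segment ℝ p q')⟩

theorem eq_of_forall_pos_mul_det3 {ι : Type*} {N : Finset ι} {p : ι → Pl} {v : Pl} {ε : ℝ}
    {w w' : ι} (hw : w ∈ N) (hw' : w' ∈ N)
    (hside : ∀ u ∈ N, u ≠ w → 0 < ε * det3 v (p w) (p u))
    (hside' : ∀ u ∈ N, u ≠ w' → 0 < ε * det3 v (p w') (p u)) : w = w' := by
  by_contra hne
  have h := hside w' hw' (Ne.symm hne)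
  have h' := hside' w hw hne
  rw [det3_swap] at h'
  linarith

def segmentGraph (P : Finset Pl) (T : Set (Set Pl)) : SimpleGraph P where
  Adj a b := (a : Pl) ≠ b ∧ segment ℝ (a : Pl) b ∈ T
  symm := ⟨fun _ _ h => ⟨h.1.symm, segment_symm ℝ (_ : Pl) _ ▸ h.2⟩⟩
  loopless := ⟨fun _ h => h.1 rfl⟩

namespace IsThrackle

open SimpleGraph

variable {P : Finset Pl} {T : Set (Set Pl)}

theorem not_disjoint (hT : IsThrackle P T) {s t : Set Pl} (hs : s ∈ T) (ht : t ∈ T) :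
    ¬Disjoint s t := by
  obtain rfl | hst := eq_or_ne s t
  · obtain ⟨a, -, b, -, -, rfl⟩ := hT.1 hs
    exact Set.not_disjoint_iff.2 ⟨a, left_mem_segment ℝ a b, left_mem_segment ℝ a b⟩
  · exact hT.2 s hs t ht hst

/-- Otherwise `u` and `x` lie on opposite sides of the line `vw`, making `vu` and `wx` disjoint. -/
theorem det3_mul_det3_pos (hP : GenPos P) (hT : IsThrackle P T) {v w u x : P}
    (hvw : (segmentGraph P T).Adj v w) (hvu : (segmentGraph P T).Adj v u)
    (hwx : (segmentGraph P T).Adj w x) (huw : (u : Pl) ≠ w) (hxv : (x : Pl) ≠ v) :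
    0 < det3 v w u * det3 v w x := by
  have hu := hP.det3_ne_zero v.2 w.2 u.2 hvw.1 hvu.1 huw.symm
  have hx := hP.det3_ne_zero v.2 w.2 x.2 hvw.1 hxv.symm hwx.1
  refine (mul_ne_zero hu hx).lt_or_gt.resolve_left fun hneg => ?_
  exact hT.not_disjoint hvu.2 hwx.2 (disjoint_segment_of_det3_mul_neg hvw.1 hneg)

section

variable [DecidableRel (segmentGraph P T).Adj]

theorem card_neighborFinset_filter_two_le_degree_le_two (hP : GenPos P) (hT : IsThrackle P T)
    (v : P) :
    #{w ∈ (segmentGraph P T).neighborFinset v | 2 ≤ (segmentGraph P T).degree w} ≤ 2 := by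
  classical
  let side (ε : ℝ) := {w ∈ (segmentGraph P T).neighborFinset v |
    ∀ u ∈ (segmentGraph P T).neighborFinset v, u ≠ w → 0 < ε * det3 v (w : Pl) (u : Pl)}
  have hside (ε : ℝ) : #(side ε) ≤ 1 := card_le_one.2 fun w hw w' hw' =>
    eq_of_forall_pos_mul_det3 (mem_filter.1 hw).1 (mem_filter.1 hw').1 (mem_filter.1 hw).2
      (mem_filter.1 hw').2
  suffices h : {w ∈ (segmentGraph P T).neighborFinset v | 2 ≤ (segmentGraph P T).degree w} ⊆
      side 1 ∪ side (-1) from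
    (card_le_card h).trans <| (card_union_le _ _).trans <| add_le_add (hside 1) (hside (-1))
  intro w hw
  obtain ⟨hw, hw2⟩ := mem_filter.1 hw
  have hvw := (mem_neighborFinset ..).1 hw
  obtain ⟨x, hx, hxv⟩ := exists_mem_ne
    (show 1 < #((segmentGraph P T).neighborFinset w) by rwa [card_neighborFinset_eq_degree]) v
  rw [mem_neighborFinset] at hx
  have hpos : ∀ u ∈ (segmentGraph P T).neighborFinset v, u ≠ w →
      0 < det3 v w u * det3 v w x :=
    fun u hu huw => det3_mul_det3_pos hP hT hvw ((mem_neighborFinset ..).1 hu)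
      hx (Subtype.coe_injective.ne huw) (Subtype.coe_injective.ne hxv)
  rcases (hP.det3_ne_zero v.2 w.2 x.2 hvw.1 (Subtype.coe_injective.ne hxv).symm hx.1).lt_or_gt
    with hneg | hpos'
  · exact mem_union_right _ <| mem_filter.2 ⟨hw, fun u hu huw => by nlinarith [hpos u hu huw]⟩
  · exact mem_union_left _ <| mem_filter.2 ⟨hw, fun u hu huw => by nlinarith [hpos u hu huw]⟩

theorem ncard_le_card_edgeFinset (hT : IsThrackle P T) :
    T.ncard ≤ #(segmentGraph P T).edgeFinset := by
  let seg : Sym2 P → Set Pl :=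
    Sym2.lift ⟨fun a b => segment ℝ a b, fun a b => segment_symm ℝ _ _⟩
  have hsub : T ⊆ seg '' (segmentGraph P T).edgeSet := by
    intro s hs
    obtain ⟨a, ha, b, hb, hab, rfl⟩ := hT.1 hs
    exact ⟨s(⟨a, ha⟩, ⟨b, hb⟩), ⟨hab, hs⟩, rfl⟩
  calc T.ncard ≤ (seg '' (segmentGraph P T).edgeSet).ncard :=
        Set.ncard_le_ncard hsub ((Set.toFinite _).image _)
    _ ≤ (segmentGraph P T).edgeSet.ncard := Set.ncard_image_le (Set.toFinite _)
    _ = #(segmentGraph P T).edgeFinset := by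
        rw [← SimpleGraph.coe_edgeFinset, Set.ncard_coe_finset]

end

theorem ncard_le (hP : GenPos P) (hT : IsThrackle P T) : T.ncard ≤ P.card := by
  classical
  calc T.ncard ≤ #(segmentGraph P T).edgeFinset := hT.ncard_le_card_edgeFinset
    _ ≤ Fintype.card P :=
        (segmentGraph P T).card_edgeFinset_le_card_of_card_neighborFinset_filter_le_two
          (hT.card_neighborFinset_filter_two_le_degree_le_two hP)
    _ = P.card := Fintype.card_coe P

end IsThrackle

theorem IsIndepSet.isThrackle_image_val {P : Set Pl} {S : Set (Segs P)}
    (hS : IsIndepSet (DisjGraph P) S) : IsThrackle P (Subtype.val '' S) := by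
  refine ⟨Set.image_subset_iff.2 fun s _ => s.2, ?_⟩
  rintro _ ⟨s, hs, rfl⟩ _ ⟨t, ht, rfl⟩ hst
  exact hS hs ht (ne_of_apply_ne _ hst)

theorem IsIndepSet.ncard_le {P : Finset Pl} (hP : GenPos P) {S : Set (Segs P)}
    (hS : IsIndepSet (DisjGraph P) S) : S.ncard ≤ P.card := by
  rw [← Set.ncard_image_of_injective S Subtype.val_injective]
  exact hS.isThrackle_image_val.ncard_le hP

theorem exists_isIndepSet_ncard_eq_card_sub_one {P : Finset Pl} {p : Pl} (hp : p ∈ P) :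
    ∃ S : Set (Segs P), IsIndepSet (DisjGraph P) S ∧ S.ncard = P.card - 1 := by
  let star : P.erase p → Segs P := fun q =>
    ⟨segment ℝ p q, p, hp, q, mem_of_mem_erase q.2, (ne_of_mem_erase q.2).symm, rfl⟩
  have hinj : Function.Injective star := fun q q' h =>
    Subtype.coe_injective (segment_right_injective p (congrArg Subtype.val h))
  refine ⟨Set.range star, ?_, ?_⟩
  · rintro _ ⟨q, rfl⟩ _ ⟨q', rfl⟩ -
    exact Set.not_disjoint_iff.2 ⟨p, left_mem_segment ℝ p q, left_mem_segment ℝ p q'⟩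
  · rw [Set.ncard_range_of_injective hinj, Nat.card_eq_fintype_card, Fintype.card_coe,
      card_erase_of_mem hp]

/-- the independence number of `D(P)` is `n - 1` or `n`. -/
theorem stmt_3 (P : Finset Pl) (hn : 3 ≤ P.card) (hgp : GenPos ↑P) :
    ∃ m : ℕ, (m = P.card - 1 ∨ m = P.card) ∧
      IsGreatest {k : ℕ | ∃ S : Set ↥(Segs (↑P : Set Pl)),
        IsIndepSet (DisjGraph ↑P) S ∧ S.ncard = k} m := by
  obtain ⟨p, hp⟩ : P.Nonempty := card_pos.1 (by omega)
  set K := {k : ℕ | ∃ S : Set ↥(Segs (↑P : Set Pl)),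
    IsIndepSet (DisjGraph ↑P) S ∧ S.ncard = k}
  have hstar : P.card - 1 ∈ K := exists_isIndepSet_ncard_eq_card_sub_one hp
  have hbdd : BddAbove K := ⟨P.card, by rintro _ ⟨S, hS, rfl⟩; exact hS.ncard_le hgp⟩
  obtain ⟨m, hm⟩ := hbdd.exists_isGreatest_of_nonempty ⟨_, hstar⟩
  obtain ⟨S, hS, hSm⟩ := hm.1
  have := hm.2 hstar
  have := hS.ncard_le hgp
  exact ⟨m, by omega, hm⟩
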